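/- Let T₁, T₂ be X-trees, and let χ be an optimal convex character for (T₁,T₂) (convex on T₁) with states A ≠ B such that: A and B are F₁-adjacent in the forest F₁ induced by a most parsimonious extension ω₁ of χ to T₁; in the forest F₂ induced by a most parsimonious extension ω₂ of χ to T₂, both A and B occur in exactly one component (both are unique). Then the character χ' obtained by relabeling A := B satisfies ℓ(T₂,χ') ≥ ℓ(T₂,χ) − 1, and hence χ' is again an optimal convex character using one fewer state. -/

import Mathlib

/-!
On `T₁`, merging `A` into `B` removes the mutation edge joining them, so `ℓ(T₁,·)` drops by at
least one; since `|χ| - 1 ≤ ℓ(T,χ)` for every tree, it drops by exactly one and `χ'` is convex.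
On `T₂`, uniqueness of `A` and `B` in `F₂` puts all `A`-leaves and all `B`-leaves in two
components of `F₂`, so a single mutation edge `e` separates them; recolouring `B` back to `A`
on the `A`-side of `e` turns any extension of `χ'` into one of `χ` with at most one more
mutation edge. So `ℓ(T₂,·) - ℓ(T₁,·)` does not decrease, and `χ'` is again optimal.
-/

open SimpleGraph

namespace PhyloMP

/-- The set of mutation edges of a vertex coloring `ω` of a graph:
edges whose two endpoints receive different states. -/
def mutationEdges {V C : Type} (g : SimpleGraph V) (ω : V → C) : Set (Sym2 V) :=
  {e | e ∈ g.edgeSet ∧ ∃ u v : V, e = s(u, v) ∧ ω u ≠ ω v}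

/-- An unrooted binary phylogenetic tree on taxon set `X`, with vertex set `V`:
a tree whose degree-1 vertices (leaves) are bijectively labeled by `X` and whose
other vertices have degree 3. -/
structure XTree (X V : Type) [Fintype V] where
  g : SimpleGraph V
  isTree : g.IsTree
  leaf : X → V
  leafInj : Function.Injective leaf
  leafDeg : ∀ x, (g.neighborSet (leaf x)).ncard = 1
  leavesOnly : ∀ v, (g.neighborSet v).ncard = 1 → ∃ x, leaf x = v
  internalDeg : ∀ v, (g.neighborSet v).ncard ≠ 1 → (g.neighborSet v).ncard = 3

variable {X V C : Type} [Fintype V]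

/-- `ω` extends the character `χ` to all vertices of `T`. -/
def IsExtension (T : XTree X V) (χ : X → C) (ω : V → C) : Prop :=
  ∀ x, ω (T.leaf x) = χ x

/-- The parsimony score `ℓ(T,χ)`: the minimum number of mutation edges over
all extensions of `χ` to `T`. -/
noncomputable def score (T : XTree X V) (χ : X → C) : ℕ :=
  sInf {n | ∃ ω : V → C, IsExtension T χ ω ∧ (mutationEdges T.g ω).ncard = n}

/-- A most parsimonious extension. -/
def IsMPExtension (T : XTree X V) (χ : X → C) (ω : V → C) : Prop :=
  IsExtension T χ ω ∧ (mutationEdges T.g ω).ncard = score T χ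

/-- `|χ|`: the number of states used by the character `χ`. -/
noncomputable def nStates {X C : Type} (χ : X → C) : ℕ := (Set.range χ).ncard

/-- `χ` is convex on `T`: its parsimony score equals its number of states minus one. -/
def IsConvex (T : XTree X V) (χ : X → C) : Prop := score T χ = nStates χ - 1

/-- The maximum parsimony distance between two `X`-trees. -/
noncomputable def dMP {V₁ V₂ : Type} [Fintype V₁] [Fintype V₂]
    (T₁ : XTree X V₁) (T₂ : XTree X V₂) : ℕ :=
  sSup {d | ∃ χ : X → ℕ, Nat.dist (score T₁ χ) (score T₂ χ) = d}

/-- A character achieving the maximum parsimony distance. -/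
def IsOptimal {V₁ V₂ : Type} [Fintype V₁] [Fintype V₂]
    (T₁ : XTree X V₁) (T₂ : XTree X V₂) (χ : X → C) : Prop :=
  Nat.dist (score T₁ χ) (score T₂ χ) = dMP T₁ T₂

/-- The forest induced by an extension `ω`: delete all mutation edges of `ω` from `T`. -/
noncomputable def forest (T : XTree X V) (ω : V → C) : SimpleGraph V :=
  T.g.deleteEdges (mutationEdges T.g ω)

/-- A connected component `c` of the forest `F` carries the state `s`. -/
def carries {V C : Type} (F : SimpleGraph V) (ω : V → C) (c : F.ConnectedComponent) (s : C) : Prop :=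
  ∃ v, F.connectedComponentMk v = c ∧ ω v = s

/-- The number of components of `F` carrying the state `s`. A state is *unique*
if this is 1 and *repeating* if this is at least 2. -/
noncomputable def stateMultiplicity {V C : Type} (F : SimpleGraph V) (ω : V → C) (s : C) : ℕ :=
  {c : F.ConnectedComponent | carries F ω c s}.ncard

/-- Relabel the state `A` as `B` in the character `χ`. -/
def relabel {X C : Type} [DecidableEq C] (χ : X → C) (A B : C) : X → C :=
  fun x => if χ x = A then B else χ x

/-- Two states `A`, `B` are adjacent (with respect to the coloring `ω`) if some edge of the
graph joins a vertex colored `A` to a vertex colored `B`; for distinct states, this edge is a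
mutation edge joining the corresponding components of the induced forest. -/
def statesAdjacent {V C : Type} (g : SimpleGraph V) (ω : V → C) (A B : C) : Prop :=
  ∃ u v, g.Adj u v ∧ ω u = A ∧ ω v = B

end PhyloMP

namespace SimpleGraph

theorem IsAcyclic.exists_mem_not_reachable_deleteEdges_singleton {V : Type} {G : SimpleGraph V}
    (hG : G.IsAcyclic) {M : Set (Sym2 V)} {a b : V} (hab : G.Reachable a b)
    (h : ¬(G.deleteEdges M).Reachable a b) :
    ∃ e ∈ M, ¬(G.deleteEdges {e}).Reachable a b := by
  classical
  by_contra! hM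
  obtain ⟨p⟩ := hab
  refine h ⟨(p.toPath : G.Walk a b).toDeleteEdges M fun e he heM => ?_⟩
  induction e using Sym2.ind with
  | _ x y =>
    obtain ⟨q, hq⟩ := reachable_deleteEdges_iff_exists_walk.mp (hM _ heM)
    rw [(hG.subsingleton_path a b).elim p.toPath q.toPath] at he
    exact hq (q.edges_toPath_subset_edges he)

end SimpleGraph

namespace PhyloMP

section Coloring

variable {V C C' : Type} {g : SimpleGraph V}

lemma mutationEdges_subset_edgeSet (ω : V → C) : mutationEdges g ω ⊆ g.edgeSet :=
  fun _ he => he.1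

lemma mutationEdges_comp_subset (ω : V → C) (f : C → C') :
    mutationEdges g (f ∘ ω) ⊆ mutationEdges g ω := by
  rintro e ⟨he, u, v, rfl, hne⟩
  exact ⟨he, u, v, rfl, fun h => hne (congrArg f h)⟩

lemma mutationEdges_piecewise_subset {e : Sym2 V} {s : Set V} [DecidablePred (· ∈ s)]
    (hs : ∀ p q, g.Adj p q → s(p, q) ≠ e → (p ∈ s ↔ q ∈ s)) (ω₁ ω₂ : V → C) :
    mutationEdges g (s.piecewise ω₁ ω₂) ⊆ insert e (mutationEdges g ω₁ ∪ mutationEdges g ω₂) := by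
  rintro _ ⟨he, p, q, rfl, hne⟩
  by_cases hpq : s(p, q) = e
  · exact Or.inl hpq
  right
  by_cases hp : p ∈ s
  · have hq : q ∈ s := (hs p q he hpq).mp hp
    rw [Set.piecewise_eq_of_mem _ _ _ hp, Set.piecewise_eq_of_mem _ _ _ hq] at hne
    exact Or.inl ⟨he, p, q, rfl, hne⟩
  · have hq : q ∉ s := mt (hs p q he hpq).mpr hp
    rw [Set.piecewise_eq_of_notMem _ _ _ hp, Set.piecewise_eq_of_notMem _ _ _ hq] at hne
    exact Or.inr ⟨he, p, q, rfl, hne⟩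

lemma eq_of_reachable_deleteEdges_mutationEdges (ω : V → C) {u v : V}
    (h : (g.deleteEdges (mutationEdges g ω)).Reachable u v) : ω u = ω v := by
  obtain ⟨p⟩ := h
  induction p with
  | nil => rfl
  | @cons u w v huw _ ih =>
    obtain ⟨huw, hmut⟩ := deleteEdges_adj.mp huw
    refine Eq.trans ?_ ih
    by_contra hne
    exact hmut ⟨huw, u, w, rfl, hne⟩

lemma reachable_of_stateMultiplicity_eq_one {F : SimpleGraph V} {ω : V → C} {c : C}
    (h : stateMultiplicity F ω c = 1) {u v : V} (hu : ω u = c) (hv : ω v = c) :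
    F.Reachable u v := by
  obtain ⟨K, hK⟩ := Set.ncard_eq_one.mp h
  have hKu : F.connectedComponentMk u ∈ {K | carries F ω K c} := ⟨u, rfl, hu⟩
  have hKv : F.connectedComponentMk v ∈ {K | carries F ω K c} := ⟨v, rfl, hv⟩
  rw [hK] at hKu hKv
  exact ConnectedComponent.exact (hKu.trans hKv.symm)

def stateGraph (g : SimpleGraph V) (ω : V → C) : SimpleGraph (Set.range ω) :=
  fromRel fun c d => statesAdjacent g ω c d

lemma stateGraph_connected (hg : g.Connected) (ω : V → C) : (stateGraph g ω).Connected := by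
  have hreach : ∀ u v, g.Reachable u v →
      (stateGraph g ω).Reachable (Set.rangeFactorization ω u) (Set.rangeFactorization ω v) := by
    rintro u v ⟨p⟩
    induction p with
    | nil => rfl
    | @cons u w v huw _ ih =>
      refine Reachable.trans ?_ ih
      by_cases hω : ω u = ω w
      · rw [show Set.rangeFactorization ω u = Set.rangeFactorization ω w from Subtype.ext hω]
      · exact Adj.reachable
          ⟨fun h => hω (congrArg Subtype.val h), Or.inl ⟨u, w, huw, rfl, rfl⟩⟩
  have := hg.nonempty
  exact ⟨by rintro ⟨_, u, rfl⟩ ⟨_, v, rfl⟩; exact hreach u v (hg u v)⟩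

lemma ncard_edgeSet_stateGraph_le [Finite V] (ω : V → C) :
    (stateGraph g ω).edgeSet.ncard ≤ (mutationEdges g ω).ncard := by
  have himage : ∀ c d : Set.range ω, c ≠ d → statesAdjacent g ω c d →
      s(c, d) ∈ Sym2.map (Set.rangeFactorization ω) '' mutationEdges g ω := by
    rintro c d hcd ⟨u, v, huv, hu, hv⟩
    refine ⟨s(u, v), ⟨huv, u, v, rfl, fun h => hcd (Subtype.ext ?_)⟩, ?_⟩
    · rw [← hu, ← hv, h]
    · rw [Sym2.map_mk, show Set.rangeFactorization ω u = c from Subtype.ext hu,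
        show Set.rangeFactorization ω v = d from Subtype.ext hv]
  have hsub : (stateGraph g ω).edgeSet ⊆
      Sym2.map (Set.rangeFactorization ω) '' mutationEdges g ω := by
    intro e he
    induction e using Sym2.ind with
    | _ c d =>
      obtain ⟨hcd, hadj | hadj⟩ := he
      · exact himage c d hcd hadj
      · exact Sym2.eq_swap ▸ himage d c (Ne.symm hcd) hadj
  exact (Set.ncard_le_ncard hsub (Set.toFinite _)).trans (Set.ncard_image_le (Set.toFinite _))

lemma ncard_range_le_ncard_mutationEdges_add_one [Finite V] (hg : g.Connected) (ω : V → C) :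
    (Set.range ω).ncard ≤ (mutationEdges g ω).ncard + 1 := by
  calc (Set.range ω).ncard = Nat.card (Set.range ω) := (Nat.card_coe_set_eq _).symm
    _ ≤ Nat.card (stateGraph g ω).edgeSet + 1 :=
      (stateGraph_connected hg ω).card_vert_le_card_edgeSet_add_one
    _ = (stateGraph g ω).edgeSet.ncard + 1 := by rw [Nat.card_coe_set_eq]
    _ ≤ (mutationEdges g ω).ncard + 1 := by gcongr; exact ncard_edgeSet_stateGraph_le ω

end Coloring

section Score

variable {X V C C' : Type} [Fintype V]

lemma XTree.finite (T : XTree X V) : Finite X :=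
  Finite.of_injective T.leaf T.leafInj

lemma score_le_ncard_mutationEdges {T : XTree X V} {χ : X → C} {ω : V → C}
    (h : IsExtension T χ ω) : score T χ ≤ (mutationEdges T.g ω).ncard :=
  Nat.sInf_le ⟨ω, h, rfl⟩

lemma exists_isMPExtension [Nonempty C] (T : XTree X V) (χ : X → C) :
    ∃ ω, IsMPExtension T χ ω := by
  have hext : IsExtension T χ (Function.extend T.leaf χ fun _ => Classical.arbitrary C) :=
    T.leafInj.extend_apply χ _
  exact Nat.sInf_mem (⟨_, _, hext, rfl⟩ :
    {n | ∃ ω : V → C, IsExtension T χ ω ∧ (mutationEdges T.g ω).ncard = n}.Nonempty)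

lemma score_le_ncard_edgeSet [Nonempty C] (T : XTree X V) (χ : X → C) :
    score T χ ≤ T.g.edgeSet.ncard := by
  obtain ⟨ω, hω, -⟩ := exists_isMPExtension T χ
  exact (score_le_ncard_mutationEdges hω).trans
    (Set.ncard_le_ncard (mutationEdges_subset_edgeSet ω) (Set.toFinite _))

lemma score_comp_le [Nonempty C] (T : XTree X V) (χ : X → C) (f : C → C') :
    score T (f ∘ χ) ≤ score T χ := by
  obtain ⟨ω, hω, hmin⟩ := exists_isMPExtension T χ
  calc score T (f ∘ χ) ≤ (mutationEdges T.g (f ∘ ω)).ncard :=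
        score_le_ncard_mutationEdges fun x => congrArg f (hω x)
    _ ≤ (mutationEdges T.g ω).ncard :=
        Set.ncard_le_ncard (mutationEdges_comp_subset ω f) (Set.toFinite _)
    _ = score T χ := hmin

lemma score_comp_of_leftInvOn [Nonempty C] [Nonempty C'] (T : XTree X V) (χ : X → C)
    {f : C → C'} {f' : C' → C} (hf : Set.LeftInvOn f' f (Set.range χ)) :
    score T (f ∘ χ) = score T χ := by
  refine (score_comp_le T χ f).antisymm ?_
  have hχ : f' ∘ f ∘ χ = χ := funext fun x => hf ⟨x, rfl⟩
  simpa only [hχ] using score_comp_le T (f ∘ χ) f'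

lemma nStates_le_score_add_one [Nonempty C] (T : XTree X V) (χ : X → C) :
    nStates χ ≤ score T χ + 1 := by
  obtain ⟨ω, hω, hmin⟩ := exists_isMPExtension T χ
  have hrange : Set.range χ ⊆ Set.range ω := by
    rintro _ ⟨x, rfl⟩
    exact ⟨T.leaf x, hω x⟩
  calc nStates χ ≤ (Set.range ω).ncard := Set.ncard_le_ncard hrange (Set.toFinite _)
    _ ≤ (mutationEdges T.g ω).ncard + 1 :=
      ncard_range_le_ncard_mutationEdges_add_one T.isTree.connected ω
    _ = score T χ + 1 := by rw [hmin]

lemma bddAbove_dist_score {V₁ V₂ : Type} [Fintype V₁] [Fintype V₂]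
    (T₁ : XTree X V₁) (T₂ : XTree X V₂) :
    BddAbove {d | ∃ χ : X → ℕ, Nat.dist (score T₁ χ) (score T₂ χ) = d} := by
  refine ⟨T₁.g.edgeSet.ncard + T₂.g.edgeSet.ncard, ?_⟩
  rintro _ ⟨χ, rfl⟩
  have h₁ := score_le_ncard_edgeSet T₁ χ
  have h₂ := score_le_ncard_edgeSet T₂ χ
  unfold Nat.dist
  omega

/-- `dMP` is a supremum over `ℕ`-valued characters only, so `χ` is first transported to `ℕ`
by a map injective on its (finite) range. -/
lemma dist_score_le_dMP [Nonempty C] {V₁ V₂ : Type} [Fintype V₁] [Fintype V₂]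
    (T₁ : XTree X V₁) (T₂ : XTree X V₂) (χ : X → C) :
    Nat.dist (score T₁ χ) (score T₂ χ) ≤ dMP T₁ T₂ := by
  have := T₁.finite
  obtain ⟨f, hf⟩ := Set.countable_iff_exists_injOn.mp (Set.countable_range χ)
  have hinv := hf.leftInvOn_invFunOn
  rw [← score_comp_of_leftInvOn T₁ χ hinv, ← score_comp_of_leftInvOn T₂ χ hinv]
  exact le_csSup (bddAbove_dist_score T₁ T₂) ⟨f ∘ χ, rfl⟩

section Relabel

variable [DecidableEq C] {A B : C}

lemma range_relabel {χ : X → C} (hB : B ∈ Set.range χ) (hAB : A ≠ B) :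
    Set.range (relabel χ A B) = Set.range χ \ {A} := by
  ext c
  constructor
  · rintro ⟨x, rfl⟩
    by_cases hx : χ x = A
    · simpa [relabel, hx, Ne.symm hAB] using hB
    · simp [relabel, hx]
  · rintro ⟨⟨x, rfl⟩, hx⟩
    exact ⟨x, if_neg hx⟩

lemma nStates_relabel_add_one [Finite X] {χ : X → C} (hA : A ∈ Set.range χ)
    (hB : B ∈ Set.range χ) (hAB : A ≠ B) : nStates (relabel χ A B) + 1 = nStates χ := by
  rw [nStates, range_relabel hB hAB, Set.ncard_sdiff_singleton_add_one hA (Set.toFinite _)]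
  rfl

lemma score_relabel_add_one_le {T : XTree X V} {χ : X → C} {ω : V → C}
    (hω : IsMPExtension T χ ω) (hadj : statesAdjacent T.g ω A B) (hAB : A ≠ B) :
    score T (relabel χ A B) + 1 ≤ score T χ := by
  obtain ⟨u, v, huv, hu, hv⟩ := hadj
  have hmut : s(u, v) ∈ mutationEdges T.g ω := ⟨huv, u, v, rfl, by rwa [hu, hv]⟩
  have hsub : mutationEdges T.g (relabel ω A B) ⊆ mutationEdges T.g ω \ {s(u, v)} := by
    refine fun e he => ⟨mutationEdges_comp_subset ω (relabel id A B) he, ?_⟩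
    rintro rfl
    obtain ⟨-, p, q, hpq, hne⟩ := he
    apply hne
    rcases Sym2.eq_iff.mp hpq with ⟨rfl, rfl⟩ | ⟨rfl, rfl⟩ <;> simp [relabel, hu, hv]
  have hext : IsExtension T (relabel χ A B) (relabel ω A B) := fun x => by
    simp only [relabel, hω.1 x]
  calc score T (relabel χ A B) + 1 ≤ (mutationEdges T.g (relabel ω A B)).ncard + 1 :=
        Nat.add_le_add_right (score_le_ncard_mutationEdges hext) 1
    _ ≤ (mutationEdges T.g ω \ {s(u, v)}).ncard + 1 :=
        Nat.add_le_add_right (Set.ncard_le_ncard hsub (Set.toFinite _)) 1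
    _ = score T χ := by rw [Set.ncard_sdiff_singleton_add_one hmut (Set.toFinite _), hω.2]

lemma isExtension_piecewise_relabel {T : XTree X V} {χ : X → C} {ω : V → C}
    (hω : IsExtension T (relabel χ A B) ω) {s : Set V} [DecidablePred (· ∈ s)]
    (hsA : ∀ x, χ x = A → T.leaf x ∈ s) (hsB : ∀ x, χ x = B → T.leaf x ∉ s) :
    IsExtension T χ (s.piecewise (relabel ω B A) ω) := by
  intro x
  have hx := hω x
  by_cases hxA : χ x = A
  · rw [Set.piecewise_eq_of_mem _ _ _ (hsA x hxA)]
    simp [relabel, hx, hxA]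
  · rw [relabel, if_neg hxA] at hx
    by_cases hxs : T.leaf x ∈ s
    · have hxB : χ x ≠ B := fun h => hsB x h hxs
      rw [Set.piecewise_eq_of_mem _ _ _ hxs]
      simp [relabel, hx, hxB]
    · rw [Set.piecewise_eq_of_notMem _ _ _ hxs, hx]

lemma score_le_score_relabel_add_one {T : XTree X V} {χ : X → C} {ω : V → C}
    (hω : IsExtension T χ ω) (hAB : A ≠ B) (hA : A ∈ Set.range χ) (hB : B ∈ Set.range χ)
    (hAu : stateMultiplicity (forest T ω) ω A = 1)
    (hBu : stateMultiplicity (forest T ω) ω B = 1) :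
    score T χ ≤ score T (relabel χ A B) + 1 := by
  classical
  have : Nonempty C := ⟨A⟩
  obtain ⟨xa, hxa⟩ := hA
  obtain ⟨xb, hxb⟩ := hB
  have hab : ¬(forest T ω).Reachable (T.leaf xa) (T.leaf xb) := fun h => hAB <| by
    rw [← hxa, ← hxb, ← hω xa, ← hω xb]
    exact eq_of_reachable_deleteEdges_mutationEdges ω h
  obtain ⟨e, he, hsep⟩ := T.isTree.isAcyclic.exists_mem_not_reachable_deleteEdges_singleton
    (T.isTree.connected.preconnected _ _) hab
  set H := T.g.deleteEdges {e}
  have hFH : forest T ω ≤ H := deleteEdges_anti (Set.singleton_subset_iff.mpr he)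
  set s := {v | H.Reachable v (T.leaf xa)}
  have hs : ∀ p q, T.g.Adj p q → s(p, q) ≠ e → (p ∈ s ↔ q ∈ s) := fun p q hpq hne => by
    have hH : H.Adj p q := deleteEdges_adj.mpr ⟨hpq, by simpa using hne⟩
    exact ⟨hH.reachable.symm.trans, hH.reachable.trans⟩
  have hsA : ∀ x, χ x = A → T.leaf x ∈ s := fun x hx =>
    (reachable_of_stateMultiplicity_eq_one hAu ((hω x).trans hx) ((hω xa).trans hxa)).mono hFH
  have hsB : ∀ x, χ x = B → T.leaf x ∉ s := fun x hx hxs => hsep <| hxs.symm.trans <|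
    (reachable_of_stateMultiplicity_eq_one hBu ((hω x).trans hx) ((hω xb).trans hxb)).mono hFH
  obtain ⟨ω', hω', hmin⟩ := exists_isMPExtension T (relabel χ A B)
  have hcomp : mutationEdges T.g (relabel ω' B A) ⊆ mutationEdges T.g ω' :=
    mutationEdges_comp_subset ω' (relabel id B A)
  have hsub := mutationEdges_piecewise_subset hs (relabel ω' B A) ω'
  rw [Set.union_eq_right.mpr hcomp] at hsub
  calc score T χ ≤ (mutationEdges T.g (s.piecewise (relabel ω' B A) ω')).ncard :=
        score_le_ncard_mutationEdges (isExtension_piecewise_relabel hω' hsA hsB)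
    _ ≤ (insert e (mutationEdges T.g ω')).ncard := Set.ncard_le_ncard hsub (Set.toFinite _)
    _ ≤ (mutationEdges T.g ω').ncard + 1 := Set.ncard_insert_le _ _
    _ = score T (relabel χ A B) + 1 := by rw [hmin]

end Relabel

end Score

end PhyloMP

open PhyloMP in
/-- If `χ` is an optimal character convex on `T₁`, the distinct states
`A`, `B` are `F₁`-adjacent, and both `A` and `B` are unique in the forest `F₂` induced by
a most parsimonious extension to `T₂`, then relabeling `A := B` decreases `ℓ(T₂,·)` by at
most one and yields again an optimal convex character with one fewer state. -/
theorem stmt_12 {X V₁ V₂ C : Type} [Fintype V₁] [Fintype V₂] [DecidableEq C]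
    (T₁ : XTree X V₁) (T₂ : XTree X V₂) (χ : X → C)
    (hopt : IsOptimal T₁ T₂ χ) (hconv : IsConvex T₁ χ)
    (ω₁ : V₁ → C) (hω₁ : IsMPExtension T₁ χ ω₁)
    (ω₂ : V₂ → C) (hω₂ : IsMPExtension T₂ χ ω₂)
    (A B : C) (hAB : A ≠ B) (hA : A ∈ Set.range χ) (hB : B ∈ Set.range χ)
    (hadj : statesAdjacent T₁.g ω₁ A B)
    (hAu : stateMultiplicity (forest T₂ ω₂) ω₂ A = 1)
    (hBu : stateMultiplicity (forest T₂ ω₂) ω₂ B = 1) :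
    score T₂ χ ≤ score T₂ (relabel χ A B) + 1 ∧
    IsOptimal T₁ T₂ (relabel χ A B) ∧
    IsConvex T₁ (relabel χ A B) ∧
    nStates (relabel χ A B) + 1 = nStates χ := by
  have : Nonempty C := ⟨A⟩
  have := T₁.finite
  have hstates := nStates_relabel_add_one hA hB hAB
  have hdrop := score_relabel_add_one_le hω₁ hadj hAB
  have hrise := score_le_score_relabel_add_one hω₂.1 hAB hA hB hAu hBu
  have hlow₁ := nStates_le_score_add_one T₁ (relabel χ A B)
  have hlow₂ := nStates_le_score_add_one T₂ χ
  have hmax := dist_score_le_dMP T₁ T₂ (relabel χ A B)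
  unfold IsOptimal IsConvex Nat.dist at *
  refine ⟨hrise, ?_, ?_, hstates⟩ <;> omega
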